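/- Let H and 𝒦 be separable complex Hilbert spaces, U : ℝ → U(H) a strongly continuous unitary representation, Λ the translation representation (Λ(t)Φ)(s) = Φ(s−t) on L²(ℝ;𝒦), W : H → L²(ℝ;𝒦) an isometry with W U(t) = Λ(t) W and WW*Λ(t) = Λ(t)WW* for all t, β > 0, (ψ_n) an orthonormal basis of 𝒦, Ψ_{K,n}(s) = Φ_K^{(β)}(s)·ψ_n with Φ_K^{(β)}(s) = (2π)^{-1/2}∫_K e^{-isξ}e^{-βξ/2}dξ, and φ_β(x) = sup_{K,N} Σ_{n=1}^N ∫_ℝ ⟨W*Ψ_{K,n}, U(t)xU(t)*W*Ψ_{K,n}⟩ dt for positive x. Set S := sup over compact K ⊆ ℝ and N ∈ ℕ of Σ_{n=1}^{N} ‖W*Ψ_{K,n}‖². Then: (i) φ_β(a*a) ≤ C_a² · S for every a ∈ B(H) with C_a < ∞; (ii) for every f ∈ L¹(ℝ) ∩ L^∞(ℝ) with f ≥ 0, φ_β(W* M_f W) = ‖f‖_{L¹} · S; consequently (iii) φ_β takes finite values on 𝒫 = {a*a : C_a < ∞} if and only if S < ∞. -/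

import Mathlib

open MeasureTheory
open scoped ENNReal NNReal

local notation "⟪" x ", " y "⟫_ℂ" => @inner ℂ _ _ x y

noncomputable section

/-- `Csq U a` is the square `C_a²` of
`C_a = (sup_{‖ψ‖=1} ∫_ℝ ‖a U(t)* ψ‖² dt)^{1/2} ∈ [0,∞]`. -/
def Csq {H : Type*} [NormedAddCommGroup H] [InnerProductSpace ℂ H] [CompleteSpace H]
    (U : ℝ → (H →L[ℂ] H)) (a : H →L[ℂ] H) : ℝ≥0∞ :=
  ⨆ ψ : {ψ : H // ‖ψ‖ = 1}, ∫⁻ t : ℝ, (‖a (star (U t) (ψ : H))‖₊ : ℝ≥0∞) ^ 2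

/-- The set `𝒫 = {a*a : C_a < ∞}` of positive `t`-integrable operators. -/
def posTIntegrable {H : Type*} [NormedAddCommGroup H] [InnerProductSpace ℂ H] [CompleteSpace H]
    (U : ℝ → (H →L[ℂ] H)) : Set (H →L[ℂ] H) :=
  {x | ∃ a : H →L[ℂ] H, Csq U a ≠ ⊤ ∧ x = star a * a}

/-- `phiFn β A` is `Φ_A^{(β)}(s) = (2π)^{-1/2} ∫_A e^{-isξ} e^{-βξ/2} dξ`. -/
def phiFn (β : ℝ) (A : Set ℝ) (s : ℝ) : ℂ :=
  (((Real.sqrt (2 * Real.pi))⁻¹ : ℝ) : ℂ) *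
    ∫ ξ in A, Complex.exp (-(Complex.I * (s : ℂ) * (ξ : ℂ)) - ((β : ℂ) * (ξ : ℂ)) / 2)

/-- The weight `φ_β(x) = sup_{K,N} Σ_{n<N} ∫_ℝ ⟨W*Ψ_{K,n}, U(t) x U(t)* W*Ψ_{K,n}⟩ dt`,
expressed through the vectors `θ A n = W*Ψ_{A,n}`. -/
def weightPhi {H : Type*} [NormedAddCommGroup H] [InnerProductSpace ℂ H] [CompleteSpace H]
    (U : ℝ → (H →L[ℂ] H)) (θ : Set ℝ → ℕ → H) (x : H →L[ℂ] H) : ℝ≥0∞ :=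
  ⨆ (A : {A : Set ℝ // IsCompact A}) (N : ℕ), ∑ n ∈ Finset.range N,
    ∫⁻ t : ℝ, ENNReal.ofReal (⟪θ A.1 n, (U t * x * star (U t)) (θ A.1 n)⟫_ℂ).re

/-- `S = sup_{K,N} Σ_{n<N} ‖W*Ψ_{K,n}‖²` (in the paper, `∫_ℝ e^{-βξ} m_{U_R}(ξ) dξ`). -/
def specWeight {H : Type*} [NormedAddCommGroup H] [InnerProductSpace ℂ H] [CompleteSpace H]
    (θ : Set ℝ → ℕ → H) : ℝ≥0∞ :=
  ⨆ (A : {A : Set ℝ // IsCompact A}) (N : ℕ), ∑ n ∈ Finset.range N,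
    (‖θ A.1 n‖₊ : ℝ≥0∞) ^ 2


/-!
Conjugating `x` by `U(t)` and integrating its quadratic form over `t` gives `c ‖ψ‖²` at every
vector `ψ`, and then every partial sum defining `φ_β(x)` is `c` times the one defining `S`.
For `x = a*a` this integral is `∫ ‖a U(t)* ψ‖² dt ≤ C_a² ‖ψ‖²`. For `x = W* M_f W` it is
`∫∫ f(s) ‖(Wψ)(s + t)‖² ds dt = ‖f‖₁ ‖ψ‖²`, because `W` intertwines `U` with translations
(Tonelli plus translation invariance of Lebesgue measure). For (iii), with `f` the indicator of
`[0, 1]`, the operator `W* M_f W` is positive, hence of the form `a*a`, and the same computation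
gives `C_a² ≤ 1`, while its weight is `S`.
-/

open ContinuousLinearMap

section Translation

variable {G : Type*} [MeasurableSpace G] [AddGroup G] [MeasurableAdd₂ G]
  {μ ν : Measure G} [μ.IsAddLeftInvariant] [SFinite μ] [SFinite ν]

theorem lintegral_lintegral_mul_comp_add {f g : G → ℝ≥0∞} (hf : Measurable f)
    (hg : Measurable g) :
    ∫⁻ t, ∫⁻ s, f s * g (s + t) ∂ν ∂μ = (∫⁻ s, f s ∂ν) * ∫⁻ t, g t ∂μ := by
  rw [lintegral_lintegral_swap
    ((hf.comp measurable_snd).mul (hg.comp (measurable_snd.add measurable_fst))).aemeasurable]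
  have hinner (s : G) : ∫⁻ t, f s * g (s + t) ∂μ = f s * ∫⁻ t, g t ∂μ := by
    rw [lintegral_const_mul _ (f := fun t => g (s + t)) (hg.comp (measurable_const_add s)),
      lintegral_add_left_eq_self g s]
  simp_rw [hinner]
  exact lintegral_mul_const _ hf

end Translation

section LpTwo

variable {α E : Type*} [MeasurableSpace α] {μ : Measure α} [NormedAddCommGroup E]

theorem MeasureTheory.Lp.lintegral_nnnorm_sq (u : Lp E 2 μ) :
    ∫⁻ x, (‖u x‖₊ : ℝ≥0∞) ^ 2 ∂μ = (‖u‖₊ : ℝ≥0∞) ^ 2 := by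
  simp_rw [← enorm_eq_nnnorm, Lp.enorm_def]
  simpa using (eLpNorm_nnreal_pow_eq_lintegral (f := u) (μ := μ) (p := 2) two_ne_zero).symm

theorem MeasureTheory.Lp.ofReal_integral_mul_norm_sq (u : Lp E 2 μ) {f : α → ℝ}
    (hfm : AEStronglyMeasurable f μ) (hf0 : 0 ≤ f) {C : ℝ} (hfC : ∀ x, |f x| ≤ C) :
    ENNReal.ofReal (∫ x, f x * ‖u x‖ ^ 2 ∂μ)
      = ∫⁻ x, ENNReal.ofReal (f x) * (‖u x‖₊ : ℝ≥0∞) ^ 2 ∂μ := by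
  have hu : Integrable (fun x => ‖u x‖ ^ 2) μ := by
    simpa using (Lp.memLp u).integrable_norm_rpow two_ne_zero ENNReal.ofNat_ne_top
  rw [ofReal_integral_eq_lintegral_ofReal (hu.bdd_mul hfm (.of_forall hfC))
    (.of_forall fun x => mul_nonneg (hf0 x) (sq_nonneg _))]
  simp_rw [ENNReal.ofReal_mul (hf0 _), ENNReal.ofReal_pow (norm_nonneg _), ofReal_norm,
    enorm_eq_nnnorm]

end LpTwo

theorem star_eq_neg_of_unitary {A : Type*} [Monoid A] [StarMul A] (U : ℝ → A)
    (hU0 : U 0 = 1) (hUadd : ∀ s t : ℝ, U (s + t) = U s * U t)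
    (hUuni : ∀ t : ℝ, U t ∈ unitary A) (t : ℝ) :
    star (U t) = U (-t) :=
  left_inv_eq_right_inv (hUuni t).1 (by rw [← hUadd, add_neg_cancel, hU0])

section Operators

variable {H : Type*} [NormedAddCommGroup H] [InnerProductSpace ℂ H] [CompleteSpace H]

theorem inner_mul_mul_star_apply (V T : H →L[ℂ] H) (v : H) :
    ⟪v, (V * T * star V) v⟫_ℂ = ⟪star V v, T (star V v)⟫_ℂ :=
  (adjoint_inner_left V (T (star V v)) v).symm

theorem ofReal_re_inner_conj_star_mul_self (V a : H →L[ℂ] H) (v : H) :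
    ENNReal.ofReal (⟪v, (V * (star a * a) * star V) v⟫_ℂ).re
      = (‖a (star V v)‖₊ : ℝ≥0∞) ^ 2 := by
  rw [inner_mul_mul_star_apply, ← RCLike.re_to_complex,
    show star a * a = adjoint a ∘L a from rfl, ← apply_norm_sq_eq_inner_adjoint_right,
    ENNReal.ofReal_pow (norm_nonneg _), ofReal_norm, enorm_eq_nnnorm]

end Operators

section Weight

variable {H : Type*} [NormedAddCommGroup H] [InnerProductSpace ℂ H] [CompleteSpace H]
  (U : ℝ → (H →L[ℂ] H)) (θ : Set ℝ → ℕ → H)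

theorem lintegral_le_Csq_mul (a : H →L[ℂ] H) (ψ : H) :
    ∫⁻ t, (‖a (star (U t) ψ)‖₊ : ℝ≥0∞) ^ 2 ≤ Csq U a * (‖ψ‖₊ : ℝ≥0∞) ^ 2 := by
  rcases eq_or_ne ψ 0 with rfl | hψ
  · simp
  set ψ₁ : H := (‖ψ‖ : ℂ)⁻¹ • ψ
  have hψ₁ : ‖ψ₁‖ = 1 := norm_smul_inv_norm hψ
  have hscale : ∀ t, (‖a (star (U t) ψ)‖₊ : ℝ≥0∞) ^ 2
      = (‖ψ‖₊ : ℝ≥0∞) ^ 2 * (‖a (star (U t) ψ₁)‖₊ : ℝ≥0∞) ^ 2 := by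
    intro t
    have : ψ = ((‖ψ‖ : ℝ) : ℂ) • ψ₁ := by
      rw [smul_smul, mul_inv_cancel₀ (by simpa using hψ), one_smul]
    conv_lhs => rw [this, map_smul, map_smul, nnnorm_smul]
    simp [mul_pow]
  simp_rw [hscale]
  rw [lintegral_const_mul' _ _ (by simp), mul_comm (Csq U a)]
  gcongr
  exact le_iSup (fun ψ : {ψ : H // ‖ψ‖ = 1} =>
    ∫⁻ t, (‖a (star (U t) (ψ : H))‖₊ : ℝ≥0∞) ^ 2) ⟨ψ₁, hψ₁⟩

theorem Csq_le_of_lintegral_le (a : H →L[ℂ] H) {c : ℝ≥0∞}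
    (h : ∀ ψ : H, ∫⁻ t, ENNReal.ofReal (⟪ψ, (U t * (star a * a) * star (U t)) ψ⟫_ℂ).re
      ≤ c * (‖ψ‖₊ : ℝ≥0∞) ^ 2) :
    Csq U a ≤ c :=
  iSup_le fun ψ => by
    have hψ : ‖(ψ : H)‖₊ = 1 := NNReal.eq ψ.2
    simpa only [ofReal_re_inner_conj_star_mul_self, hψ, ENNReal.coe_one, one_pow, mul_one]
      using h ψ

theorem weightPhi_le_mul_specWeight (x : H →L[ℂ] H) {c : ℝ≥0∞}
    (h : ∀ ψ : H, ∫⁻ t, ENNReal.ofReal (⟪ψ, (U t * x * star (U t)) ψ⟫_ℂ).re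
      ≤ c * (‖ψ‖₊ : ℝ≥0∞) ^ 2) :
    weightPhi U θ x ≤ c * specWeight θ := by
  refine iSup₂_le fun A N => ?_
  calc _ ≤ ∑ n ∈ Finset.range N, c * (‖θ A.1 n‖₊ : ℝ≥0∞) ^ 2 :=
        Finset.sum_le_sum fun n _ => h _
    _ = c * ∑ n ∈ Finset.range N, (‖θ A.1 n‖₊ : ℝ≥0∞) ^ 2 := (Finset.mul_sum _ _ _).symm
    _ ≤ c * specWeight θ := by
        gcongr
        exact le_iSup₂ (f := fun (A : {A : Set ℝ // IsCompact A}) (N : ℕ) =>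
          ∑ n ∈ Finset.range N, (‖θ A.1 n‖₊ : ℝ≥0∞) ^ 2) A N

theorem weightPhi_eq_mul_specWeight (x : H →L[ℂ] H) {c : ℝ≥0∞}
    (h : ∀ ψ : H, ∫⁻ t, ENNReal.ofReal (⟪ψ, (U t * x * star (U t)) ψ⟫_ℂ).re
      = c * (‖ψ‖₊ : ℝ≥0∞) ^ 2) :
    weightPhi U θ x = c * specWeight θ := by
  simp_rw [weightPhi, specWeight, h, ← Finset.mul_sum, ENNReal.mul_iSup]

theorem weightPhi_star_mul_self_le (a : H →L[ℂ] H) :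
    weightPhi U θ (star a * a) ≤ Csq U a * specWeight θ :=
  weightPhi_le_mul_specWeight U θ _ fun ψ => by
    simpa only [ofReal_re_inner_conj_star_mul_self] using lintegral_le_Csq_mul U a ψ

end Weight

section Dilation

variable {H F : Type*} [NormedAddCommGroup H] [InnerProductSpace ℂ H]
  [NormedAddCommGroup F] [InnerProductSpace ℂ F]

theorem ofReal_re_inner_eq_lintegral {α : Type*} [MeasurableSpace α] {μ : Measure α}
    (W : H →L[ℂ] Lp F 2 μ) {f : α → ℝ} (hfm : Measurable f) (hf0 : 0 ≤ f) {C : ℝ}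
    (hfC : ∀ s, |f s| ≤ C) (Ef : H →L[ℂ] H)
    (hEf : ∀ ψ ψ' : H,
      ⟪ψ, Ef ψ'⟫_ℂ = ∫ s, (f s : ℂ) * ⟪(W ψ : Lp F 2 μ) s, (W ψ' : Lp F 2 μ) s⟫_ℂ ∂μ)
    (φ : H) :
    ENNReal.ofReal (⟪φ, Ef φ⟫_ℂ).re
      = ∫⁻ s, ENNReal.ofReal (f s) * (‖(W φ : Lp F 2 μ) s‖₊ : ℝ≥0∞) ^ 2 ∂μ := by
  have hre : (⟪φ, Ef φ⟫_ℂ).re = ∫ s, f s * ‖(W φ : Lp F 2 μ) s‖ ^ 2 ∂μ := by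
    have hpt (s : α) : (f s : ℂ) * ⟪(W φ : Lp F 2 μ) s, (W φ : Lp F 2 μ) s⟫_ℂ
        = ((f s * ‖(W φ : Lp F 2 μ) s‖ ^ 2 : ℝ) : ℂ) := by
      simp [inner_self_eq_norm_sq_to_K]
    rw [hEf, integral_congr_ae (.of_forall hpt), integral_complex_ofReal, Complex.ofReal_re]
  rw [hre, Lp.ofReal_integral_mul_norm_sq _ hfm.aestronglyMeasurable hf0 hfC]

variable [CompleteSpace H]

theorem exists_nonneg_inner_eq_integral_mul {α : Type*} [MeasurableSpace α] {μ : Measure α}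
    [CompleteSpace F] (W : H →L[ℂ] Lp F 2 μ) {f : α → ℝ} (hfm : Measurable f) (hf0 : 0 ≤ f)
    {C : ℝ} (hfC : ∀ s, |f s| ≤ C) :
    ∃ Ef : H →L[ℂ] H, 0 ≤ Ef ∧ ∀ ψ ψ' : H,
      ⟪ψ, Ef ψ'⟫_ℂ = ∫ s, (f s : ℂ) * ⟪(W ψ : Lp F 2 μ) s, (W ψ' : Lp F 2 μ) s⟫_ℂ ∂μ := by
  set g : α → ℂ := fun s => (√(f s) : ℂ)
  have hg : MemLp g ⊤ μ := memLp_top_of_bound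
    (Complex.measurable_ofReal.comp hfm.sqrt).aestronglyMeasurable √C
    (.of_forall fun s => by
      simpa [g, abs_of_nonneg (Real.sqrt_nonneg (f s))]
        using Real.sqrt_le_sqrt ((le_abs_self _).trans (hfC s)))
  -- `M` is multiplication by `√f`, so `Ef := (M W)† (M W)` is `W† M_f W`
  set M := (lsmul ℂ ℂ : ℂ →L[ℂ] F →L[ℂ] F).holderL μ ⊤ 2 2 hg.toLp
  refine ⟨adjoint (M ∘L W) ∘L (M ∘L W), (nonneg_iff_isPositive _).2
    (isPositive_adjoint_comp_self _), fun ψ ψ' => ?_⟩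
  rw [comp_apply, adjoint_inner_right, L2.inner_def]
  refine integral_congr_ae ?_
  filter_upwards [(lsmul ℂ ℂ).coeFn_holder (r := 2) hg.toLp (W ψ),
    (lsmul ℂ ℂ).coeFn_holder (r := 2) hg.toLp (W ψ'), hg.coeFn_toLp] with s h h' hs
  simp only [comp_apply, M, holderL_apply_apply, h, h', hs, lsmul_apply, inner_smul_left,
    inner_smul_right, g, Complex.conj_ofReal, ← mul_assoc, ← Complex.ofReal_mul,
    Real.mul_self_sqrt (hf0 s)]

variable (U : ℝ → (H →L[ℂ] H)) (hU0 : U 0 = 1) (hUadd : ∀ s t : ℝ, U (s + t) = U s * U t)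
  (hUuni : ∀ t : ℝ, U t ∈ unitary (H →L[ℂ] H))
  (Λ : ℝ → (Lp F 2 (volume : Measure ℝ) →L[ℂ] Lp F 2 (volume : Measure ℝ)))
  (hΛ : ∀ (t : ℝ) (Φ : Lp F 2 (volume : Measure ℝ)),
    (Λ t Φ : ℝ → F) =ᵐ[volume] fun s => Φ (s - t))
  (W : H →L[ℂ] Lp F 2 (volume : Measure ℝ)) (hWU : ∀ t : ℝ, W ∘L U t = Λ t ∘L W)

include hU0 hUadd hUuni hΛ hWU in
theorem coeFn_apply_star_ae_eq (t : ℝ) (ψ : H) :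
    (W (star (U t) ψ) : ℝ → F) =ᵐ[volume] fun s => (W ψ : ℝ → F) (s + t) := by
  rw [star_eq_neg_of_unitary U hU0 hUadd hUuni, ← comp_apply, hWU, comp_apply]
  filter_upwards [hΛ (-t) (W ψ)] with s hs
  rw [hs, sub_neg_eq_add]

include hU0 hUadd hUuni hΛ hWU in
theorem lintegral_inner_conj_eq_of_inner_eq_integral (hWiso : ∀ ψ : H, ‖W ψ‖ = ‖ψ‖)
    (f : ℝ → ℝ) (hfm : Measurable f) (hf0 : 0 ≤ f) (hfi : Integrable f) {C : ℝ}
    (hfC : ∀ s, |f s| ≤ C) (Ef : H →L[ℂ] H)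
    (hEf : ∀ ψ ψ' : H, ⟪ψ, Ef ψ'⟫_ℂ
      = ∫ s : ℝ, (f s : ℂ) * ⟪(W ψ : Lp F 2 (volume : Measure ℝ)) s,
          (W ψ' : Lp F 2 (volume : Measure ℝ)) s⟫_ℂ)
    (ψ : H) :
    ∫⁻ t, ENNReal.ofReal (⟪ψ, (U t * Ef * star (U t)) ψ⟫_ℂ).re
      = ENNReal.ofReal (∫ s, f s) * (‖ψ‖₊ : ℝ≥0∞) ^ 2 := by
  have hWψ : Measurable fun s => (‖(W ψ : ℝ → F) s‖₊ : ℝ≥0∞) ^ 2 :=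
    (Lp.stronglyMeasurable (W ψ)).nnnorm.measurable.coe_nnreal_ennreal.pow_const 2
  calc ∫⁻ t, ENNReal.ofReal (⟪ψ, (U t * Ef * star (U t)) ψ⟫_ℂ).re
      = ∫⁻ t, ∫⁻ s, ENNReal.ofReal (f s) * (‖(W ψ : ℝ → F) (s + t)‖₊ : ℝ≥0∞) ^ 2 := by
        refine lintegral_congr fun t => ?_
        rw [inner_mul_mul_star_apply, ofReal_re_inner_eq_lintegral W hfm hf0 hfC Ef hEf]
        refine lintegral_congr_ae ?_
        filter_upwards [coeFn_apply_star_ae_eq U hU0 hUadd hUuni Λ hΛ W hWU t ψ] with s hs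
        rw [hs]
    _ = (∫⁻ s, ENNReal.ofReal (f s)) * ∫⁻ s, (‖(W ψ : ℝ → F) s‖₊ : ℝ≥0∞) ^ 2 :=
        lintegral_lintegral_mul_comp_add hfm.ennreal_ofReal hWψ
    _ = ENNReal.ofReal (∫ s, f s) * (‖ψ‖₊ : ℝ≥0∞) ^ 2 := by
        rw [Lp.lintegral_nnnorm_sq, ← ofReal_integral_eq_lintegral_ofReal hfi (.of_forall hf0),
          show ‖W ψ‖₊ = ‖ψ‖₊ from NNReal.eq (hWiso ψ)]

end Dilation

theorem stmt15_general {H F : Type*}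
    [NormedAddCommGroup H] [InnerProductSpace ℂ H] [CompleteSpace H]
    [NormedAddCommGroup F] [InnerProductSpace ℂ F] [CompleteSpace F]
    (U : ℝ → (H →L[ℂ] H))
    (hU0 : U 0 = 1) (hUadd : ∀ s t : ℝ, U (s + t) = U s * U t)
    (hUuni : ∀ t : ℝ, U t ∈ unitary (H →L[ℂ] H))
    (Λ : ℝ → (Lp F 2 (volume : Measure ℝ) →L[ℂ] Lp F 2 (volume : Measure ℝ)))
    (hΛ : ∀ (t : ℝ) (Φ : Lp F 2 (volume : Measure ℝ)),
        (Λ t Φ : ℝ → F) =ᵐ[volume] fun s => Φ (s - t))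
    (W : H →L[ℂ] Lp F 2 (volume : Measure ℝ))
    (hWiso : ∀ ψ : H, ‖W ψ‖ = ‖ψ‖)
    (hWU : ∀ t : ℝ, W ∘L U t = Λ t ∘L W)
    (θ : Set ℝ → ℕ → H) :
    (∀ a : H →L[ℂ] H, Csq U a ≠ ⊤ →
        weightPhi U θ (star a * a) ≤ Csq U a * specWeight θ) ∧
    (∀ f : ℝ → ℝ, Measurable f → 0 ≤ f → Integrable f → (∃ C : ℝ, ∀ s, |f s| ≤ C) →
        ∀ Ef : H →L[ℂ] H,
          (∀ ψ ψ' : H, ⟪ψ, Ef ψ'⟫_ℂ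
              = ∫ s : ℝ, (f s : ℂ) * ⟪(W ψ : Lp F 2 (volume : Measure ℝ)) s,
                  (W ψ' : Lp F 2 (volume : Measure ℝ)) s⟫_ℂ) →
          weightPhi U θ Ef = ENNReal.ofReal (∫ s : ℝ, f s) * specWeight θ) ∧
    ((∀ x ∈ posTIntegrable U, weightPhi U θ x ≠ ⊤) ↔ specWeight θ ≠ ⊤) := by
  have hconj := lintegral_inner_conj_eq_of_inner_eq_integral U hU0 hUadd hUuni Λ hΛ W hWU hWiso
  refine ⟨fun a _ => weightPhi_star_mul_self_le U θ a,
    fun f hfm hf0 hfi ⟨C, hfC⟩ Ef hEf =>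
      weightPhi_eq_mul_specWeight U θ Ef (hconj f hfm hf0 hfi hfC Ef hEf), ⟨fun hfin => ?_, ?_⟩⟩
  · set f : ℝ → ℝ := (Set.Icc (0 : ℝ) 1).indicator 1
    have hfm : Measurable f := measurable_one.indicator measurableSet_Icc
    have hf0 : 0 ≤ f := Set.indicator_nonneg fun _ _ => zero_le_one
    have hfC : ∀ s, |f s| ≤ 1 := fun s => by
      by_cases hs : s ∈ Set.Icc (0 : ℝ) 1 <;> simp [f, hs]
    have hfi : Integrable f := (integrable_indicator_iff measurableSet_Icc).2
      (integrableOn_const (by simp [Real.volume_Icc]))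
    have hf1 : ∫ s, f s = 1 := by simp [f, integral_indicator measurableSet_Icc]
    obtain ⟨Ef, hEf0, hEf⟩ := exists_nonneg_inner_eq_integral_mul W hfm hf0 hfC
    obtain ⟨a, rfl⟩ := CStarAlgebra.nonneg_iff_eq_star_mul_self.mp hEf0
    have hCsq : Csq U a ≠ ⊤ := ne_top_of_le_ne_top ENNReal.ofReal_ne_top
      (Csq_le_of_lintegral_le U a fun ψ => (hconj f hfm hf0 hfi hfC _ hEf ψ).le)
    simpa [weightPhi_eq_mul_specWeight U θ _ (hconj f hfm hf0 hfi hfC _ hEf), hf1]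
      using hfin _ ⟨a, hCsq, rfl⟩
  · rintro hS _ ⟨a, ha, rfl⟩
    exact ne_top_of_le_ne_top (ENNReal.mul_ne_top ha hS) (weightPhi_star_mul_self_le U θ a)

/-- In the dilated QRF setting, with
`S := sup_{K,N} Σ_{n<N} ‖W*Ψ_{K,n}‖²`: (i) `φ_β(a*a) ≤ C_a²·S` whenever `C_a < ∞`;
(ii) `φ_β(W* M_f W) = ‖f‖_{L¹}·S` for every `0 ≤ f ∈ L¹ ∩ L^∞`; and consequently
(iii) `φ_β` is finite on `𝒫` if and only if `S < ∞`. -/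
theorem stmt15 {H F : Type*}
    [NormedAddCommGroup H] [InnerProductSpace ℂ H] [CompleteSpace H] [SecondCountableTopology H]
    [NormedAddCommGroup F] [InnerProductSpace ℂ F] [CompleteSpace F] [SecondCountableTopology F]
    (U : ℝ → (H →L[ℂ] H))
    (hU0 : U 0 = 1) (hUadd : ∀ s t : ℝ, U (s + t) = U s * U t)
    (hUuni : ∀ t : ℝ, U t ∈ unitary (H →L[ℂ] H))
    (hUcont : ∀ ψ : H, Continuous fun t : ℝ => U t ψ)
    (Λ : ℝ → (Lp F 2 (volume : Measure ℝ) →L[ℂ] Lp F 2 (volume : Measure ℝ)))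
    (hΛ : ∀ (t : ℝ) (Φ : Lp F 2 (volume : Measure ℝ)),
        (Λ t Φ : ℝ → F) =ᵐ[volume] fun s => Φ (s - t))
    (W : H →L[ℂ] Lp F 2 (volume : Measure ℝ))
    (hWiso : ∀ ψ : H, ‖W ψ‖ = ‖ψ‖)
    (hWU : ∀ t : ℝ, W ∘L U t = Λ t ∘L W)
    (hWcomm : ∀ t : ℝ,
        (W ∘L ContinuousLinearMap.adjoint W) ∘L Λ t
          = Λ t ∘L (W ∘L ContinuousLinearMap.adjoint W))
    (β : ℝ) (hβ : 0 < β)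
    (e : ℕ → F)
    (he_orth : ∀ m n : ℕ, m ≠ n → ⟪e m, e n⟫_ℂ = 0)
    (he_norm : ∀ n : ℕ, ‖e n‖ = 1 ∨ e n = 0)
    (he_total : (Submodule.span ℂ (Set.range e)).topologicalClosure = ⊤)
    (θ : Set ℝ → ℕ → H)
    (hθ : ∀ A : Set ℝ, IsCompact A → ∀ (n : ℕ) (ψ : H),
        ⟪θ A n, ψ⟫_ℂ = ∫ s : ℝ, ⟪phiFn β A s • e n, (W ψ : Lp F 2 (volume : Measure ℝ)) s⟫_ℂ) :
    (∀ a : H →L[ℂ] H, Csq U a ≠ ⊤ →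
        weightPhi U θ (star a * a) ≤ Csq U a * specWeight θ) ∧
    (∀ f : ℝ → ℝ, Measurable f → 0 ≤ f → Integrable f → (∃ C : ℝ, ∀ s, |f s| ≤ C) →
        ∀ Ef : H →L[ℂ] H,
          (∀ ψ ψ' : H, ⟪ψ, Ef ψ'⟫_ℂ
              = ∫ s : ℝ, (f s : ℂ) * ⟪(W ψ : Lp F 2 (volume : Measure ℝ)) s,
                  (W ψ' : Lp F 2 (volume : Measure ℝ)) s⟫_ℂ) →
          weightPhi U θ Ef = ENNReal.ofReal (∫ s : ℝ, f s) * specWeight θ) ∧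
    ((∀ x ∈ posTIntegrable U, weightPhi U θ x ≠ ⊤) ↔ specWeight θ ≠ ⊤) :=
  stmt15_general U hU0 hUadd hUuni Λ hΛ W hWiso hWU θ
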